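/- Let H be a complex Hilbert space and let (η_k)_{k∈ℕ} be a sequence of unit vectors in H that converges weakly to 0, i.e., ⟨η_k, ζ⟩ → 0 as k → ∞ for every ζ ∈ H. Then for every natural number I there exist indices k₀ < k₁ < … < k_I such that for every vector ξ ∈ H one has ∑_{i=0}^{I} |⟨ξ, η_{k_i}⟩|² ≤ 2‖ξ‖². -/

import Mathlib

/-!
Weak nullity lets one pass to a subsequence whose pairwise inner products are at most
`1 / (I + 1)`, so every row sum of the Gram matrix of `η (k 0), …, η (k I)` is at most
`1 + I / (I + 1) ≤ 2`. For `w = ∑ ⟪η (k i), ξ⟫ • η (k i)` and `S = ∑ ‖⟪ξ, η (k i)⟫‖ ^ 2` one has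
`⟪ξ, w⟫ = S`, while the row-sum bound (Schur test) gives `‖w‖ ^ 2 ≤ 2 * S`; Cauchy–Schwarz then
yields `S ^ 2 ≤ ‖ξ‖ ^ 2 * 2 * S`.
-/

open Filter Finset

open scoped InnerProductSpace

theorem extraction_pairwise_of_eventually {P : ℕ → ℕ → Prop}
    (h : ∀ n, ∀ᶠ k in atTop, P n k) :
    ∃ φ : ℕ → ℕ, StrictMono φ ∧ ∀ m n, m < n → P (φ m) (φ n) := by
  have hnext : ∀ b, ∃ k, b < k ∧ ∀ n ∈ Iic b, P n k := fun b =>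
    ((eventually_gt_atTop b).and ((eventually_all_finset _).2 fun n _ => h n)).exists
  choose next hnext_gt hnext_P using hnext
  have hmono : StrictMono fun n => next^[n] 0 := strictMono_nat_of_lt_succ fun n => by
    simpa only [Function.iterate_succ_apply'] using hnext_gt _
  refine ⟨fun n => next^[n] 0, hmono, fun m n hmn => ?_⟩
  obtain ⟨n, rfl⟩ : ∃ n', n = n' + 1 := ⟨n - 1, by omega⟩
  show P (next^[m] 0) (next^[n + 1] 0)
  rw [Function.iterate_succ_apply']
  exact hnext_P _ _ (mem_Iic.2 (hmono.monotone (Nat.le_of_lt_succ hmn)))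

section Bessel

variable {𝕜 E ι : Type*} [RCLike 𝕜] [NormedAddCommGroup E] [InnerProductSpace 𝕜 E]
  [Fintype ι] {v : ι → E} {C : ℝ}

theorem norm_sum_smul_sq_le_of_sum_norm_inner_le (hC : ∀ i, ∑ j, ‖⟪v i, v j⟫_𝕜‖ ≤ C)
    (c : ι → 𝕜) : ‖∑ i, c i • v i‖ ^ 2 ≤ C * ∑ i, ‖c i‖ ^ 2 := by
  set G : ι → ι → ℝ := fun i j => ‖⟪v i, v j⟫_𝕜‖
  have hG_symm : ∀ i j, G i j = G j i := fun i j => norm_inner_symm _ _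
  have hG_nonneg : ∀ i j, 0 ≤ G i j := fun i j => norm_nonneg _
  -- AM-GM on each entry, then the symmetry of `G` merges the two halves
  have hhalf : ∑ i, ∑ j, ‖c i‖ * ‖c j‖ * G i j ≤ ∑ i, ‖c i‖ ^ 2 * ∑ j, G i j := by
    calc ∑ i, ∑ j, ‖c i‖ * ‖c j‖ * G i j
        ≤ ∑ i, ∑ j, (‖c i‖ ^ 2 * G i j + ‖c j‖ ^ 2 * G j i) / 2 := by
          gcongr with i _ j _
          rw [hG_symm j i]
          nlinarith [hG_nonneg i j, sq_nonneg (‖c i‖ - ‖c j‖)]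
      _ = ∑ i, ‖c i‖ ^ 2 * ∑ j, G i j := by
          simp only [add_div, sum_add_distrib]
          rw [sum_comm (f := fun i j => ‖c j‖ ^ 2 * G j i / 2)]
          simp only [mul_sum, ← sum_add_distrib, add_halves]
  calc ‖∑ i, c i • v i‖ ^ 2 = RCLike.re ⟪∑ i, c i • v i, ∑ i, c i • v i⟫_𝕜 :=
        (inner_self_eq_norm_sq _).symm
    _ ≤ ‖⟪∑ i, c i • v i, ∑ i, c i • v i⟫_𝕜‖ := RCLike.re_le_norm _
    _ ≤ ∑ i, ∑ j, ‖c i‖ * ‖c j‖ * G i j := by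
        simp only [sum_inner, inner_sum, inner_smul_left, inner_smul_right, mul_sum]
        refine (norm_sum_le _ _).trans (sum_le_sum fun i _ => (norm_sum_le _ _).trans ?_)
        refine le_of_eq (sum_congr rfl fun j _ => ?_)
        rw [norm_mul, norm_mul, RCLike.norm_conj, hG_symm]
        ring
    _ ≤ ∑ i, ‖c i‖ ^ 2 * ∑ j, G i j := hhalf
    _ ≤ ∑ i, ‖c i‖ ^ 2 * C := by gcongr with i; exact hC i
    _ = C * ∑ i, ‖c i‖ ^ 2 := by rw [← sum_mul, mul_comm]

theorem sum_norm_inner_sq_le_of_sum_norm_inner_le (hC₀ : 0 ≤ C)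
    (hC : ∀ i, ∑ j, ‖⟪v i, v j⟫_𝕜‖ ≤ C) (ξ : E) :
    ∑ i, ‖⟪ξ, v i⟫_𝕜‖ ^ 2 ≤ C * ‖ξ‖ ^ 2 := by
  set S := ∑ i, ‖⟪ξ, v i⟫_𝕜‖ ^ 2
  set w := ∑ i, ⟪v i, ξ⟫_𝕜 • v i
  have hS_nonneg : 0 ≤ S := by positivity
  have hξw : ⟪ξ, w⟫_𝕜 = S := by
    simp only [w, S, inner_sum, inner_smul_right, RCLike.ofReal_sum]
    refine sum_congr rfl fun i _ => ?_
    rw [← inner_conj_symm (v i) ξ, RCLike.conj_mul]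
    norm_cast
  have hS_le : S ≤ ‖ξ‖ * ‖w‖ := by
    simpa [hξw, abs_of_nonneg hS_nonneg] using norm_inner_le_norm (𝕜 := 𝕜) ξ w
  have hw : ‖w‖ ^ 2 ≤ C * S := by
    simpa only [w, S, norm_inner_symm ξ] using norm_sum_smul_sq_le_of_sum_norm_inner_le hC _
  have hS_sq : S * S ≤ C * ‖ξ‖ ^ 2 * S :=
    calc S * S ≤ ‖ξ‖ ^ 2 * ‖w‖ ^ 2 := by
          nlinarith [mul_le_mul hS_le hS_le hS_nonneg (by positivity)]
      _ ≤ ‖ξ‖ ^ 2 * (C * S) := by gcongr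
      _ = C * ‖ξ‖ ^ 2 * S := by ring
  rcases hS_nonneg.eq_or_lt with hS_zero | hS_pos
  · rw [← hS_zero]; positivity
  · exact le_of_mul_le_mul_right hS_sq hS_pos

end Bessel

section AlmostOrthogonal

variable {𝕜 E : Type*} [RCLike 𝕜] [NormedAddCommGroup E] [InnerProductSpace 𝕜 E]

theorem sum_norm_inner_le_of_pairwise {ι : Type*} [Fintype ι] [DecidableEq ι] {v : ι → E}
    {δ : ℝ} (hv : ∀ i, ‖v i‖ = 1) (hδ : Pairwise fun i j => ‖⟪v i, v j⟫_𝕜‖ ≤ δ) (i : ι) :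
    ∑ j, ‖⟪v i, v j⟫_𝕜‖ ≤ 1 + (Fintype.card ι - 1) * δ := by
  have hdiag : ‖⟪v i, v i⟫_𝕜‖ = 1 := by simp [hv]
  have hcard : ((univ.erase i).card : ℝ) = Fintype.card ι - 1 := by
    rw [card_erase_of_mem (mem_univ i), card_univ,
      Nat.cast_sub (Fintype.card_pos_iff.2 ⟨i⟩), Nat.cast_one]
  rw [← add_sum_erase _ _ (mem_univ i), hdiag, ← hcard, ← nsmul_eq_mul]
  gcongr
  exact sum_le_card_nsmul _ _ _ fun j hj => hδ (ne_of_mem_erase hj).symm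

theorem exists_strictMono_pairwise_norm_inner_le {η : ℕ → E}
    (hη : ∀ ζ, Tendsto (fun k => ⟪η k, ζ⟫_𝕜) atTop (nhds 0)) {δ : ℝ} (hδ : 0 < δ) :
    ∃ φ : ℕ → ℕ, StrictMono φ ∧ Pairwise fun m n => ‖⟪η (φ m), η (φ n)⟫_𝕜‖ ≤ δ := by
  have hsmall : ∀ j, ∀ᶠ k in atTop, ‖⟪η j, η k⟫_𝕜‖ ≤ δ := fun j => by
    simpa only [norm_inner_symm (η j)] using
      (hη (η j)).norm.eventually (eventually_le_nhds (by simpa using hδ))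
  obtain ⟨φ, hφ, hφδ⟩ := extraction_pairwise_of_eventually hsmall
  refine ⟨φ, hφ, fun m n hmn => ?_⟩
  rcases hmn.lt_or_gt with h | h
  · exact hφδ m n h
  · rw [norm_inner_symm]; exact hφδ n m h

end AlmostOrthogonal

open scoped ComplexInnerProductSpace

theorem stmt_3_general {H : Type*} [NormedAddCommGroup H] [InnerProductSpace ℂ H]
    (η : ℕ → H)
    (hunit : ∀ k, ‖η k‖ = 1)
    (hweak : ∀ ζ : H, Filter.Tendsto (fun k => ⟪η k, ζ⟫) Filter.atTop (nhds 0)) :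
    ∀ I : ℕ, ∃ k : Fin (I + 1) → ℕ, StrictMono k ∧
      ∀ ξ : H, ∑ i : Fin (I + 1), ‖⟪ξ, η (k i)⟫‖ ^ 2 ≤ 2 * ‖ξ‖ ^ 2 := by
  intro I
  obtain ⟨φ, hφ, hφδ⟩ :=
    exists_strictMono_pairwise_norm_inner_le hweak (δ := 1 / (I + 1)) (by positivity)
  have hrow (i : Fin (I + 1)) : ∑ j : Fin (I + 1), ‖⟪η (φ i), η (φ j)⟫‖ ≤ 2 := by
    refine (sum_norm_inner_le_of_pairwise (fun _ => hunit _)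
      (hφδ.comp_of_injective Fin.val_injective) i).trans ?_
    rw [Fintype.card_fin, Nat.cast_add, Nat.cast_one, add_sub_cancel_right]
    have : (I : ℝ) * (1 / (I + 1)) ≤ 1 := by
      rw [mul_one_div, div_le_one (by positivity)]; linarith
    linarith
  exact ⟨fun i => φ i, hφ.comp Fin.val_strictMono,
    sum_norm_inner_sq_le_of_sum_norm_inner_le zero_le_two hrow⟩

/-- From a weakly null sequence of unit vectors in a complex Hilbert space one
can extract, for every `I`, indices `k₀ < k₁ < … < k_I` such that for every
vector `ξ`, `∑_{i=0}^I |⟨ξ, η_{k_i}⟩|² ≤ 2‖ξ‖²`. -/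
theorem stmt_3 {H : Type*} [NormedAddCommGroup H] [InnerProductSpace ℂ H]
    [CompleteSpace H] (η : ℕ → H)
    (hunit : ∀ k, ‖η k‖ = 1)
    (hweak : ∀ ζ : H, Filter.Tendsto (fun k => ⟪η k, ζ⟫) Filter.atTop (nhds 0)) :
    ∀ I : ℕ, ∃ k : Fin (I + 1) → ℕ, StrictMono k ∧
      ∀ ξ : H, ∑ i : Fin (I + 1), ‖⟪ξ, η (k i)⟫‖ ^ 2 ≤ 2 * ‖ξ‖ ^ 2 :=
  stmt_3_general η hunit hweak
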